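/- Let n ≥ 1 and let R be a 2n-adically closed ring whose spectrum Spec(R) is irreducible (equivalently, the nilradical of R is a prime ideal). Let p₁, …, p_k be prime ideals of R. Then there is a unique prime ideal P of R which is maximal (with respect to inclusion) among all prime ideals contained in p₁ ∩ ⋯ ∩ p_k. -/

import Mathlib

/-- A ring `R` is *`n`-adically closed* if every monic polynomial of degree `n` with
coefficients in `R` has a root in `R`. -/
def AdicallyClosed (n : ℕ) (R : Type*) [CommRing R] : Prop :=
  ∀ p : Polynomial R, p.Monic → p.natDegree = n → ∃ x : R, p.IsRoot x

/-!
Zorn's lemma gives a maximal prime below `⋂ i, p i` above the nilradical. For uniqueness, the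
sum `P ⊔ Q` of two such primes stays below `⋂ i, p i` and is again prime, because a
`2n`-adically closed ring is `2`-adically closed: if `f * g ∈ P ⊔ Q`, split `f * g = a + b`
and choose a root `e` of `X ^ 2 - (f + g) X + a`. Then `e * (f + g - e) = a ∈ P` and
`(e - f) * (e - g) = b ∈ Q`, and each of the four cases puts `f` or `g` into `P ⊔ Q`.
-/

open Polynomial

theorem AdicallyClosed.of_mul {R : Type*} [CommRing R] {m n : ℕ}
    (h : AdicallyClosed (m * n) R) : AdicallyClosed m R := by
  intro f hf hdeg
  rcases Nat.eq_zero_or_pos n with rfl | hn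
  · obtain ⟨x, hx⟩ := h 1 monic_one (by simp)
    have : Subsingleton R := subsingleton_of_zero_eq_one (by simpa using hx.symm)
    exact ⟨0, Subsingleton.elim _ _⟩
  · obtain ⟨x, hx⟩ := h (expand R n f) ((monic_expand_iff hn).mpr hf)
      (by rw [natDegree_expand, hdeg])
    exact ⟨x ^ n, by simpa [IsRoot, expand_eval] using hx⟩

theorem AdicallyClosed.exists_quadratic_root {R : Type*} [CommRing R] [Nontrivial R]
    (h : AdicallyClosed 2 R) (s t : R) : ∃ e : R, e ^ 2 + s * e + t = 0 := by
  obtain ⟨e, he⟩ := h (X ^ 2 + C s * X + C t) (by monicity!) (by compute_degree!)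
  exact ⟨e, by simpa [IsRoot] using he⟩

theorem AdicallyClosed.isPrime_sup {R : Type*} [CommRing R] (h : AdicallyClosed 2 R)
    {P Q : Ideal R} (hP : P.IsPrime) (hQ : Q.IsPrime) (hne : P ⊔ Q ≠ ⊤) :
    (P ⊔ Q).IsPrime := by
  have : Nontrivial R :=
    nontrivial_of_ne 0 1 fun h => hP.ne_top ((P.eq_top_iff_one).mpr (h ▸ P.zero_mem))
  refine ⟨hne, fun {f g} hfg => ?_⟩
  obtain ⟨a, ha, b, hb, hab⟩ := Submodule.mem_sup.mp hfg
  obtain ⟨e, he⟩ := h.exists_quadratic_root (-(f + g)) a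
  have hA : e * (f + g - e) ∈ P := by convert ha using 1; linear_combination -he
  have hB : (e - f) * (e - g) ∈ Q := by convert hb using 1; linear_combination he - hab
  have mem_sup {x y z : R} (hx : x ∈ P) (hy : y ∈ Q) (hz : z = x + y) : z ∈ P ⊔ Q :=
    hz ▸ Submodule.add_mem_sup hx hy
  rcases hP.mem_or_mem hA with h1 | h1 <;> rcases hQ.mem_or_mem hB with h2 | h2
  · exact .inl (mem_sup h1 (Q.neg_mem h2) (by ring))
  · exact .inr (mem_sup h1 (Q.neg_mem h2) (by ring))
  · exact .inr (mem_sup h1 h2 (by ring))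
  · exact .inl (mem_sup h1 h2 (by ring))

namespace Ideal

variable {R : Type*} [CommRing R]

theorem sSup_isPrime_of_isChain {s : Set (Ideal R)} (hs : s.Nonempty)
    (hchain : IsChain (· ≤ ·) s) (H : ∀ p ∈ s, p.IsPrime) : (sSup s).IsPrime := by
  have mem_sSup {x : R} : x ∈ sSup s ↔ ∃ p ∈ s, x ∈ p :=
    Submodule.mem_sSup_of_directed hs hchain.directedOn
  refine ⟨fun htop => ?_, fun {x y} hxy => ?_⟩
  · obtain ⟨p, hp, h1⟩ := mem_sSup.mp ((eq_top_iff_one _).mp htop)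
    exact (H p hp).ne_top ((eq_top_iff_one p).mpr h1)
  · obtain ⟨p, hp, hxy⟩ := mem_sSup.mp hxy
    exact ((H p hp).mem_or_mem hxy).imp (le_sSup hp ·) (le_sSup hp ·)

theorem exists_maximal_isPrime_le {P I : Ideal R} (hP : P.IsPrime) (hPI : P ≤ I) :
    ∃ M, Maximal (fun q : Ideal R => q.IsPrime ∧ q ≤ I) M := by
  obtain ⟨M, -, hM⟩ := zorn_le_nonempty₀ {q : Ideal R | q.IsPrime ∧ q ≤ I}
    (fun c hc hchain q hq => ⟨sSup c,
      ⟨sSup_isPrime_of_isChain ⟨q, hq⟩ hchain fun r hr => (hc hr).1,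
        sSup_le fun r hr => (hc hr).2⟩,
      fun _ => le_sSup⟩) P ⟨hP, hPI⟩
  exact ⟨M, hM⟩

end Ideal

theorem existsUnique_maximal_prime_le_iInf_general {R : Type*} [CommRing R] (n : ℕ)
    (hR : AdicallyClosed (2 * n) R) (hirr : (nilradical R).IsPrime)
    {ι : Type*} [Nonempty ι] (p : ι → Ideal R) (hp : ∀ i, (p i).IsPrime) :
    ∃! P : Ideal R, Maximal (fun q : Ideal R => q.IsPrime ∧ q ≤ ⨅ i, p i) P := by
  have hI : ⨅ i, p i ≠ ⊤ := fun h =>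
    (hp (Classical.arbitrary ι)).ne_top (top_le_iff.mp (h ▸ iInf_le p _))
  obtain ⟨M, hM⟩ := Ideal.exists_maximal_isPrime_le hirr
    (le_iInf fun i => nilradical_le_prime (p i))
  refine ⟨M, hM, fun Q hQ => ?_⟩
  have hle : Q ⊔ M ≤ ⨅ i, p i := sup_le hQ.prop.2 hM.prop.2
  have hsup : (Q ⊔ M).IsPrime ∧ Q ⊔ M ≤ ⨅ i, p i :=
    ⟨hR.of_mul.isPrime_sup hQ.prop.1 hM.prop.1 (ne_top_of_le_ne_top hI hle), hle⟩
  exact le_antisymm (le_sup_left.trans (hM.2 hsup le_sup_right))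
    (le_sup_right.trans (hQ.2 hsup le_sup_left))

/-- Let `R` be a `2n`-adically closed ring (`n ≥ 1`) whose spectrum is irreducible, i.e.
whose nilradical is prime. Given finitely many (at least one) prime ideals `p i` of `R`,
there is a unique prime ideal which is maximal among the prime ideals contained in
`⋂ i, p i`. -/
theorem existsUnique_maximal_prime_le_iInf {R : Type*} [CommRing R] (n : ℕ) (hn : 1 ≤ n)
    (hR : AdicallyClosed (2 * n) R) (hirr : (nilradical R).IsPrime)
    {ι : Type*} [Finite ι] [Nonempty ι] (p : ι → Ideal R) (hp : ∀ i, (p i).IsPrime) :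
    ∃! P : Ideal R, Maximal (fun q : Ideal R => q.IsPrime ∧ q ≤ ⨅ i, p i) P :=
  existsUnique_maximal_prime_le_iInf_general n hR hirr p hp
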